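/- arXiv:2505.12128 — 2 statements merged into one kernel-verified Lean document; each statement's English description precedes it below -/
import Mathlib

section
/- Fix 0 ≤ β < 1 and define c_k^β = sum over j from 0 to k of β^{k-j} r_j r_{k-j} where r_j = binom(2j,j)/4^j. Then for all k ≥ 1, c_k^β ≤ c_{k-1}^β * (1 - (1-β)^2/(2k)). -/
noncomputable def r (j : ℕ) : ℝ := (Nat.choose (2*j) j : ℝ) / 4^j

noncomputable def c (β : ℝ) (k : ℕ) : ℝ :=
  ∑ j ∈ Finset.range (k + 1), β^(k - j) * r j * r (k - j)

/-! Writing `c β n = ∑_{i+j=n} β^j r_i r_j` and using `2(i+1) r_{i+1} = (2i+1) r_i` on each factor,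
`2(n+1) c_{n+1}` becomes `∑_{i+j=n} ((2i+1) + β(2j+1)) β^j r_i r_j`. Since `i + j = n`, the
coefficient falls short of `2(n+1) - (1-β)^2` by `(1-β)(β+2j) ≥ 0`. -/

open Finset

lemma r_pos (j : ℕ) : 0 < r j := by
  unfold r
  have := Nat.choose_pos (Nat.le_mul_of_pos_left j two_pos)
  positivity

lemma two_mul_succ_mul_r_succ (i : ℕ) : 2 * ((i : ℝ) + 1) * r (i + 1) = (2 * i + 1) * r i := by
  have h : ((i : ℝ) + 1) * ((2 * (i + 1)).choose (i + 1) : ℝ) = 2 * (2 * i + 1) * ((2 * i).choose i) := by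
    exact_mod_cast Nat.succ_mul_centralBinom_succ i
  unfold r
  field_simp
  linear_combination 2 * 4 ^ i * h

lemma c_eq_sum_antidiagonal (β : ℝ) (n : ℕ) :
    c β n = ∑ p ∈ antidiagonal n, β ^ p.2 * r p.1 * r p.2 :=
  (Nat.sum_antidiagonal_eq_sum_range_succ (fun i j => β ^ j * r i * r j) n).symm

lemma two_mul_succ_mul_c_succ (β : ℝ) (n : ℕ) :
    2 * ((n : ℝ) + 1) * c β (n + 1) =
      ∑ p ∈ antidiagonal n, ((2 * p.1 + 1) + β * (2 * p.2 + 1)) * (β ^ p.2 * r p.1 * r p.2) := by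
  set t : ℕ × ℕ → ℝ := fun p => β ^ p.2 * r p.1 * r p.2 with ht
  have hsplit : 2 * ((n : ℝ) + 1) * c β (n + 1) =
      ∑ p ∈ antidiagonal (n + 1), 2 * (p.1 : ℝ) * t p +
        ∑ p ∈ antidiagonal (n + 1), 2 * (p.2 : ℝ) * t p := by
    rw [c_eq_sum_antidiagonal, mul_sum, ← sum_add_distrib]
    refine sum_congr rfl fun p hp => ?_
    have hsum : (p.1 : ℝ) + p.2 = n + 1 := by exact_mod_cast mem_antidiagonal.mp hp
    linear_combination (-2 * t p) * hsum
  have hfst : ∑ p ∈ antidiagonal (n + 1), 2 * (p.1 : ℝ) * t p =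
      ∑ p ∈ antidiagonal n, (2 * (p.1 : ℝ) + 1) * t p := by
    rw [Nat.sum_antidiagonal_succ]
    simp only [ht, Nat.cast_zero, mul_zero, zero_mul, zero_add, Nat.cast_succ]
    refine sum_congr rfl fun p _ => ?_
    linear_combination (β ^ p.2 * r p.2) * two_mul_succ_mul_r_succ p.1
  have hsnd : ∑ p ∈ antidiagonal (n + 1), 2 * (p.2 : ℝ) * t p =
      ∑ p ∈ antidiagonal n, β * (2 * (p.2 : ℝ) + 1) * t p := by
    rw [Nat.sum_antidiagonal_succ']
    simp only [ht, Nat.cast_zero, mul_zero, zero_mul, zero_add, Nat.cast_succ]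
    refine sum_congr rfl fun p _ => ?_
    linear_combination (β ^ (p.2 + 1) * r p.1) * two_mul_succ_mul_r_succ p.2
  rw [hsplit, hfst, hsnd, ← sum_add_distrib]
  exact sum_congr rfl fun p _ => by ring

lemma two_mul_succ_mul_c_succ_le {β : ℝ} (hβ0 : 0 ≤ β) (hβ1 : β ≤ 1) (n : ℕ) :
    2 * ((n : ℝ) + 1) * c β (n + 1) ≤ (2 * ((n : ℝ) + 1) - (1 - β) ^ 2) * c β n := by
  rw [two_mul_succ_mul_c_succ, c_eq_sum_antidiagonal, mul_sum]
  refine sum_le_sum fun p hp => mul_le_mul_of_nonneg_right ?_ (by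
    have := r_pos p.1; have := r_pos p.2; positivity)
  have hsum : (p.1 : ℝ) + p.2 = n := by exact_mod_cast mem_antidiagonal.mp hp
  have hgap : 0 ≤ (1 - β) * (β + 2 * p.2) := mul_nonneg (by linarith) (by positivity)
  linear_combination hgap + 2 * hsum

theorem stmt_9 (β : ℝ) (hβ0 : 0 ≤ β) (hβ1 : β < 1) (k : ℕ) (hk : 1 ≤ k) :
    c β k ≤ c β (k - 1) * (1 - (1 - β)^2 / (2 * k)) := by
  obtain ⟨n, rfl⟩ : ∃ n, k = n + 1 := ⟨k - 1, by omega⟩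
  have hpos : (0 : ℝ) < 2 * ((n : ℝ) + 1) := by positivity
  have hrhs : c β n * (1 - (1 - β) ^ 2 / (2 * ((n : ℝ) + 1))) =
      (2 * ((n : ℝ) + 1) - (1 - β) ^ 2) * c β n / (2 * ((n : ℝ) + 1)) := by
    field_simp
  rw [Nat.add_sub_cancel, Nat.cast_succ, hrhs, le_div_iff₀ hpos, mul_comm]
  exact two_mul_succ_mul_c_succ_le hβ0 hβ1.le n
end

section
/- Fix 0 ≤ β < 1. For every k ≥ 0, sum over j from 0 to k of tilde_c_j^β * (1 - β^{k-j+1})/(1-β) equals c_k^β, where tilde_c_j^β = sum_{i=0}^{j} tilde_r_i β^i tilde_r_{j-i} and c_k^β = sum_{j=0}^{k} β^{k-j} r_j r_{k-j}. -/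
/-- Generalized binomial coefficient `binom(x, k) = x(x-1)⋯(x-k+1)/k!`. -/
noncomputable def gbinom (x : ℝ) (k : ℕ) : ℝ :=
  (∏ i ∈ Finset.range k, (x - i)) / (Nat.factorial k)

noncomputable def tr (j : ℕ) : ℝ := (-1)^j * gbinom (1/2) j

noncomputable def tc (β : ℝ) (j : ℕ) : ℝ :=
  ∑ i ∈ Finset.range (j + 1), tr i * β^i * tr (j - i)

/-!
Let `T = ∑ tr j Xʲ` (the series of `√(1 - X)`), `R = ∑ r j Xʲ` (that of `1 / √(1 - X)`) and
`G = ∑ Xʲ = 1 / (1 - X)`. Then `T * G = R`, which on coefficients says that the partial sums of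
`tr` are the `r n`; it follows from the recurrences `tr (n + 1) = - r n / (2n + 2)` and
`r (n + 1) = r n (2n + 1) / (2n + 2)`. Writing `f(βX)` for `rescale β f`, the sum in the theorem is
the `k`-th coefficient of `(T(βX) T(X)) (G(βX) G(X))`, since `tc β` is the coefficient sequence of
`T(βX) T(X)` and `(1 - β^(n+1)) / (1 - β)` is that of `G(βX) G(X)`. Regrouping the product as
`(T G)(βX) (T G)(X) = R(βX) R(X)` gives the coefficients `c β k`.
-/

open PowerSeries

lemma gbinom_succ (x : ℝ) (n : ℕ) : gbinom x (n + 1) = gbinom x n * (x - n) / (n + 1) := by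
  rw [gbinom, gbinom, Finset.prod_range_succ, Nat.factorial_succ]
  push_cast
  rw [div_mul_eq_mul_div, div_div, mul_comm ((n : ℝ) + 1)]

lemma r_succ (n : ℕ) : r (n + 1) = r n * (2 * n + 1) / (2 * n + 2) := by
  have h := congrArg (Nat.cast (R := ℝ)) (Nat.succ_mul_centralBinom_succ n)
  push_cast [Nat.centralBinom] at h
  rw [r, r]
  field_simp [pow_succ]
  linear_combination (2 : ℝ) * 4 ^ n * h

lemma tr_succ (n : ℕ) : tr (n + 1) = - r n / (2 * (n + 1)) := by
  induction n with
  | zero => norm_num [tr, gbinom, r]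
  | succ n ih =>
    have h : tr (n + 2) = tr (n + 1) * (2 * (n + 1) - 1) / (2 * (n + 1) + 2) := by
      rw [tr, tr, pow_succ, gbinom_succ]
      push_cast
      field_simp
      ring
    rw [h, ih, r_succ]
    push_cast
    field_simp
    ring

lemma sum_range_succ_tr (n : ℕ) : ∑ i ∈ Finset.range (n + 1), tr i = r n := by
  induction n with
  | zero => norm_num [tr, gbinom, r]
  | succ n ih =>
    rw [Finset.sum_range_succ, ih, tr_succ, r_succ]
    field_simp
    ring

lemma coeff_mul_mk_one {S : Type*} [CommSemiring S] (φ : S⟦X⟧) (n : ℕ) :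
    coeff n (φ * mk 1) = ∑ i ∈ Finset.range (n + 1), coeff i φ := by
  simp [coeff_mul, Finset.Nat.sum_antidiagonal_eq_sum_range_succ_mk]

lemma mk_tr_mul_mk_one : mk tr * mk 1 = mk r := by
  ext n
  rw [coeff_mul_mk_one, coeff_mk]
  simpa using sum_range_succ_tr n

lemma coeff_rescale_mul_self {S : Type*} [CommSemiring S] (a : S) (f : ℕ → S) (n : ℕ) :
    coeff n (rescale a (mk f) * mk f) = ∑ i ∈ Finset.range (n + 1), f i * a ^ i * f (n - i) := by
  rw [coeff_mul, Finset.Nat.sum_antidiagonal_eq_sum_range_succ_mk]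
  simp only [coeff_rescale, coeff_mk, mul_comm]

lemma coeff_rescale_mul_self_mk_tr (β : ℝ) (n : ℕ) : coeff n (rescale β (mk tr) * mk tr) = tc β n :=
  coeff_rescale_mul_self β tr n

lemma coeff_rescale_mul_self_mk_r (β : ℝ) (n : ℕ) : coeff n (rescale β (mk r) * mk r) = c β n := by
  rw [coeff_rescale_mul_self, c, ← Finset.sum_range_reflect]
  refine Finset.sum_congr rfl fun j hj => ?_
  have hj : j ≤ n := Nat.lt_succ_iff.mp (Finset.mem_range.mp hj)
  rw [Nat.add_sub_cancel, Nat.sub_sub_self hj]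
  ring

lemma coeff_rescale_mul_self_mk_one {K : Type*} [Field K] {β : K} (hβ : β ≠ 1) (n : ℕ) :
    coeff n (rescale β (mk 1) * mk 1) = (1 - β ^ (n + 1)) / (1 - β) := by
  simp only [coeff_rescale_mul_self, Pi.one_apply, one_mul, mul_one]
  rw [geom_sum_eq hβ, ← neg_div_neg_eq, neg_sub, neg_sub]

theorem stmt_14_general (β : ℝ) (hβ1 : β < 1) (k : ℕ) :
    ∑ j ∈ Finset.range (k + 1), tc β j * (1 - β^(k - j + 1)) / (1 - β) = c β k := by
  calc ∑ j ∈ Finset.range (k + 1), tc β j * (1 - β ^ (k - j + 1)) / (1 - β)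
      = coeff k ((rescale β (mk tr) * mk tr) * (rescale β (mk 1) * mk 1)) := by
        rw [coeff_mul, Finset.Nat.sum_antidiagonal_eq_sum_range_succ_mk]
        refine Finset.sum_congr rfl fun j _ => ?_
        rw [coeff_rescale_mul_self_mk_tr, coeff_rescale_mul_self_mk_one hβ1.ne, mul_div_assoc]
    _ = coeff k (rescale β (mk tr * mk 1) * (mk tr * mk 1)) := by
        rw [map_mul (rescale β), mul_mul_mul_comm]
    _ = c β k := by rw [mk_tr_mul_mk_one, coeff_rescale_mul_self_mk_r]

theorem stmt_14 (β : ℝ) (hβ0 : 0 ≤ β) (hβ1 : β < 1) (k : ℕ) :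
    ∑ j ∈ Finset.range (k + 1), tc β j * (1 - β^(k - j + 1)) / (1 - β) = c β k :=
  stmt_14_general β hβ1 k
end
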